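/- Let N ≥ 1 be an integer, let n_1, …, n_N be reals with n_i ≥ 3 for all i, and let A_1, …, A_N > 0 with Σ_{i=1}^N A_i = A. Then Σ_{i=1}^N A_i^{3/2}/(A g(n_i)) ≥ A^{1/2} / ( √N · g( (Σ_{i=1}^N n_i)/N ) ), and equality holds only if all the n_i are equal. -/

import Mathlib

open Real

noncomputable def gfun (n : ℝ) : ℝ :=
  3 * Real.sqrt n * tan (π/n) ^ ((3:ℝ)/2) /
    (log (tan (π/(2*n) + π/4)) + tan (π/n) / cos (π/n))

/-!
Put `x = π / n`. Then `g(n)² = F(x) = 9π sin³x / (x cos³x D(x)²)` with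
`D(x) = sec x tan x + gd⁻¹ x`. Radon's (Hölder's) inequality gives
`(∑ Aᵢ)^{3/2} ≤ (∑ Aᵢ^{3/2} / gᵢ) (∑ gᵢ²)^{1/2}`, and Jensen's inequality for the strictly concave
function `n ↦ g(n)²` gives `∑ g(nᵢ)² ≤ N g(n̄)²`, strictly unless all `nᵢ` coincide.
Concavity of `n ↦ F(π / n)` amounts to `x F'' + 2 F' < 0`; with `F' = F u` this is
`x u² + x u' + 2u < 0`, whose left side factors as a positive multiple of
`(D - 2 sin x / cos²x) (D - 2 sin x / (cos²x (1 + sin²x)))`. Both factors have a fixed sign by the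
elementary bounds `sin x / (1 + sin²x) < gd⁻¹ x < sin x / cos²x`, proved by differentiating.
-/

open Set Finset

lemma pos_of_hasDerivAt_pos {h h' : ℝ → ℝ} {b x : ℝ} (hd : ∀ y ∈ Ico 0 b, HasDerivAt h (h' y) y)
    (hpos : ∀ y ∈ Ioo 0 b, 0 < h' y) (h0 : h 0 = 0) (hx : x ∈ Ioo 0 b) : 0 < h x := by
  have hsub : interior (Icc 0 x) ⊆ Ioo 0 b := by
    rw [interior_Icc]; exact Ioo_subset_Ioo_right hx.2.le
  have hmono : StrictMonoOn h (Icc 0 x) :=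
    strictMonoOn_of_hasDerivWithinAt_pos (convex_Icc 0 x)
      (fun y hy => (hd y ⟨hy.1, hy.2.trans_lt hx.2⟩).continuousAt.continuousWithinAt)
      (fun y hy => (hd y (Ioo_subset_Ico_self (hsub hy))).hasDerivWithinAt)
      (fun y hy => hpos y (hsub hy))
  simpa [h0] using hmono (left_mem_Icc.2 hx.1.le) (right_mem_Icc.2 hx.1.le) hx.1

theorem strictConcaveOn_comp_div {F F' F'' : ℝ → ℝ} {c b : ℝ} (hc : 0 < c) (hb : 0 < b)
    (hF : ∀ x ∈ Ioo 0 b, HasDerivAt F (F' x) x)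
    (hF' : ∀ x ∈ Ioo 0 b, HasDerivAt F' (F'' x) x)
    (hneg : ∀ x ∈ Ioo 0 b, x * F'' x + 2 * F' x < 0) :
    StrictConcaveOn ℝ (Ioi (c / b)) (fun n => F (c / n)) := by
  have hpos : ∀ n ∈ Ioi (c / b), 0 < n := fun n hn => (div_pos hc hb).trans hn
  have hmem : ∀ n ∈ Ioi (c / b), c / n ∈ Ioo 0 b := fun n hn =>
    ⟨div_pos hc (hpos n hn), (div_lt_comm₀ (hpos n hn) hb).2 hn⟩
  have hdiv : ∀ n ∈ Ioi (c / b), HasDerivAt (fun m => c / m) (-(c / n ^ 2)) n := fun n hn => by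
    simpa [div_eq_mul_inv] using (hasDerivAt_inv (hpos n hn).ne').const_mul c
  have hd1 : ∀ n ∈ Ioi (c / b),
      HasDerivAt (fun m => F (c / m)) (F' (c / n) * (-(c / n ^ 2))) n := fun n hn =>
    (hF _ (hmem n hn)).comp n (hdiv n hn)
  have hd2 : ∀ n ∈ Ioi (c / b), HasDerivAt (fun m => F' (c / m) * (-(c / m ^ 2)))
      (F'' (c / n) * (-(c / n ^ 2)) * (-(c / n ^ 2)) + F' (c / n) * (2 * c / n ^ 3)) n := by
    intro n hn
    have hn0 := hpos n hn
    have hsq : HasDerivAt (fun m => -(c / m ^ 2)) (2 * c / n ^ 3) n := by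
      refine ((hasDerivAt_const n c).fun_div ((hasDerivAt_id' n).fun_pow 2)
        (by positivity)).fun_neg.congr_deriv ?_
      field_simp
      ring
    exact ((hF' _ (hmem n hn)).comp n (hdiv n hn)).fun_mul hsq
  refine strictConcaveOn_of_deriv2_neg' (convex_Ioi _)
    (fun n hn => (hd1 n hn).continuousAt.continuousWithinAt) fun n hn => ?_
  have hderiv : deriv (fun m => F (c / m)) =ᶠ[nhds n] fun m => F' (c / m) * (-(c / m ^ 2)) :=
    Filter.eventually_of_mem (isOpen_Ioi.mem_nhds hn) fun m hm => (hd1 m hm).deriv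
  rw [Function.iterate_succ_apply, Function.iterate_one, hderiv.deriv_eq, (hd2 n hn).deriv]
  have hsecond : F'' (c / n) * -(c / n ^ 2) * -(c / n ^ 2) + F' (c / n) * (2 * c / n ^ 3) =
      c / n ^ 3 * (c / n * F'' (c / n) + 2 * F' (c / n)) := by ring
  rw [hsecond]
  exact mul_neg_of_pos_of_neg (div_pos hc (pow_pos (hpos n hn) 3)) (hneg _ (hmem n hn))

-- Radon's inequality.
theorem rpow_sum_le_sum_rpow_div_mul_rpow_sum {ι : Type*} (s : Finset ι) {p : ℝ} (hp : 1 ≤ p)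
    {a b : ι → ℝ} (ha : ∀ i, 0 ≤ a i) (hb : ∀ i, 0 < b i) :
    (∑ i ∈ s, a i) ^ p ≤ (∑ i ∈ s, a i ^ p / b i ^ (p - 1)) * (∑ i ∈ s, b i) ^ (p - 1) := by
  have hp0 : 0 < p := by linarith
  have hholder := inner_le_weight_mul_Lp_of_nonneg s hp b (fun i => a i / b i)
    (fun i => (hb i).le) (fun i => div_nonneg (ha i) (hb i).le)
  have hlhs : ∑ i ∈ s, b i * (a i / b i) = ∑ i ∈ s, a i :=
    sum_congr rfl fun i _ => mul_div_cancel₀ _ (hb i).ne'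
  have hterm : ∑ i ∈ s, b i * (a i / b i) ^ p = ∑ i ∈ s, a i ^ p / b i ^ (p - 1) := by
    refine sum_congr rfl fun i _ => ?_
    rw [div_rpow (ha i) (hb i).le, rpow_sub_one (hb i).ne']
    field_simp
  rw [hlhs, hterm] at hholder
  have hB : 0 ≤ ∑ i ∈ s, b i := sum_nonneg fun i _ => (hb i).le
  have hT : 0 ≤ ∑ i ∈ s, a i ^ p / b i ^ (p - 1) :=
    sum_nonneg fun i _ => div_nonneg (rpow_nonneg (ha i) p) (rpow_nonneg (hb i).le _)
  calc (∑ i ∈ s, a i) ^ p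
      ≤ ((∑ i ∈ s, b i) ^ (1 - p⁻¹) * (∑ i ∈ s, a i ^ p / b i ^ (p - 1)) ^ p⁻¹) ^ p :=
        rpow_le_rpow (sum_nonneg fun i _ => ha i) hholder hp0.le
    _ = (∑ i ∈ s, a i ^ p / b i ^ (p - 1)) * (∑ i ∈ s, b i) ^ (p - 1) := by
        rw [mul_rpow (rpow_nonneg hB _) (rpow_nonneg hT _), ← rpow_mul hB, ← rpow_mul hT,
          inv_mul_cancel₀ hp0.ne', rpow_one, sub_mul, one_mul, inv_mul_cancel₀ hp0.ne', mul_comm]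

lemma rpow_half_div_sqrt_sum_sq_le {ι : Type*} {s : Finset ι} (hs : s.Nonempty) {a G : ι → ℝ}
    (ha : ∀ i, 0 < a i) (hG : ∀ i, 0 < G i) :
    (∑ i ∈ s, a i) ^ ((1 : ℝ) / 2) / √(∑ i ∈ s, G i ^ 2)
      ≤ ∑ i ∈ s, a i ^ ((3 : ℝ) / 2) / ((∑ j ∈ s, a j) * G i) := by
  have hA : 0 < ∑ i ∈ s, a i := sum_pos (fun i _ => ha i) hs
  have hT : 0 < √(∑ i ∈ s, G i ^ 2) := sqrt_pos.2 (sum_pos (fun i _ => pow_pos (hG i) 2) hs)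
  have hradon := rpow_sum_le_sum_rpow_div_mul_rpow_sum s (by norm_num : (1 : ℝ) ≤ 3 / 2)
    (fun i => (ha i).le) (fun i => pow_pos (hG i) 2)
  simp only [show (3 : ℝ) / 2 - 1 = 1 / 2 by norm_num, ← sqrt_eq_rpow,
    fun i => sqrt_sq (hG i).le] at hradon
  simp_rw [mul_comm (∑ j ∈ s, a j), ← div_div]
  rwa [← sum_div, div_le_div_iff₀ hT hA, ← rpow_add_one hA.ne',
    show (1 : ℝ) / 2 + 1 = 3 / 2 by norm_num]

lemma sum_inv_card_smul {ι : Type*} (t : Finset ι) (p : ι → ℝ) :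
    ∑ i ∈ t, (#t : ℝ)⁻¹ • p i = (∑ i ∈ t, p i) / #t := by
  rw [← smul_sum, smul_eq_mul, inv_mul_eq_div]

theorem ConcaveOn.sum_le_card_mul_map_mean {ι : Type*} {t : Finset ι} {s : Set ℝ} {f : ℝ → ℝ}
    {p : ι → ℝ} (hf : ConcaveOn ℝ s f) (hp : ∀ i ∈ t, p i ∈ s) :
    ∑ i ∈ t, f (p i) ≤ #t * f ((∑ i ∈ t, p i) / #t) := by
  rcases t.eq_empty_or_nonempty with rfl | ht
  · simp
  have hcard : (0 : ℝ) < #t := by exact_mod_cast ht.card_pos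
  have := hf.le_map_sum (fun i _ => inv_nonneg.2 hcard.le) (by simp [hcard.ne']) hp
  rwa [sum_inv_card_smul, sum_inv_card_smul, div_le_iff₀ hcard, mul_comm] at this

theorem StrictConcaveOn.eq_of_card_mul_map_mean_le {ι : Type*} {t : Finset ι} {s : Set ℝ}
    {f : ℝ → ℝ} {p : ι → ℝ} (hf : StrictConcaveOn ℝ s f) (hp : ∀ i ∈ t, p i ∈ s)
    (h : #t * f ((∑ i ∈ t, p i) / #t) ≤ ∑ i ∈ t, f (p i)) :
    ∀ i ∈ t, ∀ j ∈ t, p i = p j := by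
  rcases t.eq_empty_or_nonempty with rfl | ht
  · simp
  have hcard : (0 : ℝ) < #t := by exact_mod_cast ht.card_pos
  refine hf.eq_of_map_sum_eq (fun i _ => inv_pos.2 hcard) (by simp [hcard.ne']) hp ?_
  rwa [sum_inv_card_smul, sum_inv_card_smul, le_div_iff₀ hcard, mul_comm]

lemma lt_sum_div_card {ι : Type*} {t : Finset ι} (ht : t.Nonempty) {n : ι → ℝ} {c : ℝ}
    (hn : ∀ i ∈ t, c < n i) : c < (∑ i ∈ t, n i) / #t := by
  obtain ⟨i, hi⟩ := ht
  rw [← expect_eq_sum_div_card]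
  exact lt_expect (fun j hj => (hn j hj).le) ⟨i, hi, hn i hi⟩

lemma sin_pos_and_cos_pos {x : ℝ} (hx : x ∈ Ioo 0 (π / 2)) : 0 < sin x ∧ 0 < cos x :=
  ⟨sin_pos_of_pos_of_lt_pi hx.1 (by linarith [hx.2, pi_pos]),
    cos_pos_of_mem_Ioo ⟨by linarith [hx.1, pi_pos], hx.2⟩⟩

lemma Ico_zero_pi_div_two_subset : Ico 0 (π / 2) ⊆ Ioo (-(π / 2)) (π / 2) :=
  Ico_subset_Ioo_left (neg_neg_of_pos (half_pos pi_pos))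

lemma pi_div_mem_Ioo {n : ℝ} (hn : 2 < n) : π / n ∈ Ioo 0 (π / 2) :=
  ⟨div_pos pi_pos (by linarith), div_lt_div_of_pos_left pi_pos two_pos hn⟩

-- The inverse Gudermannian function `gd⁻¹`.
noncomputable def invGd (x : ℝ) : ℝ := log (tan (x / 2 + π / 4))

lemma invGd_zero : invGd 0 = 0 := by
  simp [invGd, tan_pi_div_four]

lemma hasDerivAt_invGd {x : ℝ} (hx : x ∈ Ioo (-(π / 2)) (π / 2)) :
    HasDerivAt invGd (cos x)⁻¹ x := by
  have hθ : x / 2 + π / 4 ∈ Ioo 0 (π / 2) := ⟨by linarith [hx.1], by linarith [hx.2]⟩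
  obtain ⟨hsin, hcos⟩ := sin_pos_and_cos_pos hθ
  have hdouble : 2 * sin (x / 2 + π / 4) * cos (x / 2 + π / 4) = cos x := by
    rw [← sin_two_mul, show 2 * (x / 2 + π / 4) = x + π / 2 by ring, sin_add_pi_div_two]
  have hlin : HasDerivAt (fun y => y / 2 + π / 4) (1 / 2) x := by
    simpa using ((hasDerivAt_id x).div_const 2).add_const (π / 4)
  have htan : HasDerivAt (fun y => tan (y / 2 + π / 4))
      (1 / cos (x / 2 + π / 4) ^ 2 * (1 / 2)) x :=
    (hasDerivAt_tan hcos.ne').comp (h := fun y => y / 2 + π / 4) x hlin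
  refine (htan.log (tan_pos_of_pos_of_lt_pi_div_two hθ.1 hθ.2).ne').congr_deriv ?_
  rw [← hdouble, tan_eq_sin_div_cos]
  field_simp

lemma invGd_lt_sin_div_cos_sq {x : ℝ} (hx : x ∈ Ioo 0 (π / 2)) : invGd x < sin x / cos x ^ 2 := by
  have hd : ∀ y ∈ Ico 0 (π / 2),
      HasDerivAt (fun y => sin y / cos y ^ 2 - invGd y) (2 * sin y ^ 2 / cos y ^ 3) y := by
    intro y hy
    have hcos := cos_pos_of_mem_Ioo (Ico_zero_pi_div_two_subset hy)
    refine (((hasDerivAt_sin y).fun_div ((hasDerivAt_cos y).fun_pow 2) (by positivity)).fun_sub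
      (hasDerivAt_invGd (Ico_zero_pi_div_two_subset hy))).congr_deriv ?_
    field_simp
    ring
  have := pos_of_hasDerivAt_pos hd (fun y hy => by
    obtain ⟨hsin, hcos⟩ := sin_pos_and_cos_pos hy; positivity) (by simp [invGd_zero]) hx
  linarith

lemma sin_div_one_add_sin_sq_lt_invGd {x : ℝ} (hx : x ∈ Ioo 0 (π / 2)) :
    sin x / (1 + sin x ^ 2) < invGd x := by
  have hd : ∀ y ∈ Ico 0 (π / 2), HasDerivAt (fun y => invGd y - sin y / (1 + sin y ^ 2))
      ((cos y)⁻¹ - cos y ^ 3 / (1 + sin y ^ 2) ^ 2) y := by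
    intro y hy
    have hcos := cos_pos_of_mem_Ioo (Ico_zero_pi_div_two_subset hy)
    have hquot := (hasDerivAt_sin y).fun_div
      ((hasDerivAt_const y 1).fun_add ((hasDerivAt_sin y).fun_pow 2)) (by positivity)
    refine ((hasDerivAt_invGd (Ico_zero_pi_div_two_subset hy)).fun_sub hquot).congr_deriv ?_
    field_simp
    linear_combination cos y ^ 2 * sin_sq_add_cos_sq y
  have hpos : ∀ y ∈ Ioo 0 (π / 2), 0 < (cos y)⁻¹ - cos y ^ 3 / (1 + sin y ^ 2) ^ 2 := by
    intro y hy
    obtain ⟨hsin, hcos⟩ := sin_pos_and_cos_pos hy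
    have hcos_lt : cos y < 1 := by nlinarith [sin_sq_add_cos_sq y]
    have hcube : cos y ^ 3 / (1 + sin y ^ 2) ^ 2 ≤ cos y ^ 3 :=
      div_le_self (by positivity) (one_le_pow₀ (by nlinarith))
    have : cos y ^ 3 < 1 := pow_lt_one₀ hcos.le hcos_lt (by norm_num)
    have : 1 < (cos y)⁻¹ := one_lt_inv₀ hcos |>.2 hcos_lt
    linarith
  linarith [pos_of_hasDerivAt_pos hd hpos (by simp [invGd_zero]) hx]

-- `sec x tan x + gd⁻¹ x = 2 ∫₀ˣ sec³`; `gDen (π / n)` is the denominator of `gfun n`.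
noncomputable def gDen (x : ℝ) : ℝ := sin x / cos x ^ 2 + invGd x

lemma hasDerivAt_gDen {x : ℝ} (hx : x ∈ Ioo (-(π / 2)) (π / 2)) :
    HasDerivAt gDen (2 / cos x ^ 3) x := by
  have hcos := cos_pos_of_mem_Ioo hx
  refine (((hasDerivAt_sin x).fun_div ((hasDerivAt_cos x).fun_pow 2) (by positivity)).fun_add
    (hasDerivAt_invGd hx)).congr_deriv ?_
  field_simp
  linear_combination 2 * cos x * sin_sq_add_cos_sq x

lemma gDen_lt {x : ℝ} (hx : x ∈ Ioo 0 (π / 2)) : gDen x < 2 * sin x / cos x ^ 2 := by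
  have := invGd_lt_sin_div_cos_sq hx
  rw [gDen, mul_div_assoc, two_mul]
  linarith

lemma lt_gDen {x : ℝ} (hx : x ∈ Ioo 0 (π / 2)) :
    2 * sin x / (cos x ^ 2 * (1 + sin x ^ 2)) < gDen x := by
  obtain ⟨hsin, hcos⟩ := sin_pos_and_cos_pos hx
  have hsplit : 2 * sin x / (cos x ^ 2 * (1 + sin x ^ 2)) =
      sin x / cos x ^ 2 + sin x / (1 + sin x ^ 2) := by
    field_simp
    linear_combination (-1) * sin_sq_add_cos_sq x
  rw [hsplit, gDen]
  linarith [sin_div_one_add_sin_sq_lt_invGd hx]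

lemma gDen_pos {x : ℝ} (hx : x ∈ Ioo 0 (π / 2)) : 0 < gDen x := by
  obtain ⟨hsin, hcos⟩ := sin_pos_and_cos_pos hx
  exact lt_trans (by positivity) (lt_gDen hx)

noncomputable def gSq (x : ℝ) : ℝ := 9 * π * sin x ^ 3 / (x * cos x ^ 3 * gDen x ^ 2)

noncomputable def gSqLogDeriv (x : ℝ) : ℝ := 3 / (sin x * cos x) - 1 / x - 4 / (cos x ^ 3 * gDen x)

noncomputable def gSqLogDerivDeriv (x : ℝ) : ℝ :=
  -3 * (cos x ^ 2 - sin x ^ 2) / (sin x ^ 2 * cos x ^ 2) + 1 / x ^ 2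
    - 12 * sin x / (cos x ^ 4 * gDen x) + 8 / (cos x ^ 6 * gDen x ^ 2)

lemma gSq_pos {x : ℝ} (hx : x ∈ Ioo 0 (π / 2)) : 0 < gSq x := by
  obtain ⟨hsin, hcos⟩ := sin_pos_and_cos_pos hx
  have hD := gDen_pos hx
  have hx0 := hx.1
  unfold gSq
  positivity

lemma hasDerivAt_gSq {x : ℝ} (hx : x ∈ Ioo 0 (π / 2)) :
    HasDerivAt gSq (gSq x * gSqLogDeriv x) x := by
  obtain ⟨hsin, hcos⟩ := sin_pos_and_cos_pos hx
  have hD := gDen_pos hx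
  have hx0 := hx.1
  have hnum := ((hasDerivAt_sin x).fun_pow 3).const_mul (9 * π)
  have hden := ((hasDerivAt_id' x).fun_mul ((hasDerivAt_cos x).fun_pow 3)).fun_mul
    ((hasDerivAt_gDen (Ico_zero_pi_div_two_subset (Ioo_subset_Ico_self hx))).fun_pow 2)
  refine (hnum.fun_div hden (by positivity)).congr_deriv ?_
  simp only [gSq, gSqLogDeriv]
  field_simp
  linear_combination 3 * sin x ^ 2 * cos x ^ 2 * x * gDen x ^ 2 * sin_sq_add_cos_sq x

lemma hasDerivAt_gSqLogDeriv {x : ℝ} (hx : x ∈ Ioo 0 (π / 2)) :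
    HasDerivAt gSqLogDeriv (gSqLogDerivDeriv x) x := by
  obtain ⟨hsin, hcos⟩ := sin_pos_and_cos_pos hx
  have hD := gDen_pos hx
  have hx0 := hx.1
  have h1 := (hasDerivAt_const x (3 : ℝ)).fun_div ((hasDerivAt_sin x).fun_mul (hasDerivAt_cos x))
    (by positivity)
  have h2 := (hasDerivAt_const x (1 : ℝ)).fun_div (hasDerivAt_id' x) hx0.ne'
  have h3 := (hasDerivAt_const x (4 : ℝ)).fun_div (((hasDerivAt_cos x).fun_pow 3).fun_mul
    (hasDerivAt_gDen (Ico_zero_pi_div_two_subset (Ioo_subset_Ico_self hx)))) (by positivity)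
  refine ((h1.fun_sub h2).fun_sub h3).congr_deriv ?_
  rw [gSqLogDerivDeriv]
  field_simp
  ring

-- Negative because `gDen x` lies strictly between the two roots of the quadratic factor.
lemma mul_gSqLogDeriv_sq_add_mul_deriv_add_two_mul_neg {x : ℝ} (hx : x ∈ Ioo 0 (π / 2)) :
    x * gSqLogDeriv x ^ 2 + x * gSqLogDerivDeriv x + 2 * gSqLogDeriv x < 0 := by
  obtain ⟨hsin, hcos⟩ := sin_pos_and_cos_pos hx
  have hD := gDen_pos hx
  have hx0 := hx.1
  have hfactor : x * gSqLogDeriv x ^ 2 + x * gSqLogDerivDeriv x + 2 * gSqLogDeriv x =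
      6 * x * (1 + sin x ^ 2) / (sin x ^ 2 * cos x ^ 2 * gDen x ^ 2) *
        ((gDen x - 2 * sin x / cos x ^ 2) *
          (gDen x - 2 * sin x / (cos x ^ 2 * (1 + sin x ^ 2)))) := by
    simp only [gSqLogDeriv, gSqLogDerivDeriv]
    field_simp
    linear_combination (-3 * cos x ^ 4 * x ^ 2 * gDen x ^ 2) * sin_sq_add_cos_sq x
  rw [hfactor]
  exact mul_neg_of_pos_of_neg (by positivity)
    (mul_neg_of_neg_of_pos (by linarith [gDen_lt hx]) (by linarith [lt_gDen hx]))

theorem strictConcaveOn_gSq_pi_div : StrictConcaveOn ℝ (Ioi 2) (fun n => gSq (π / n)) := by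
  have hF' : ∀ x ∈ Ioo 0 (π / 2), HasDerivAt (fun y => gSq y * gSqLogDeriv y)
      (gSq x * (gSqLogDeriv x ^ 2 + gSqLogDerivDeriv x)) x := fun x hx =>
    ((hasDerivAt_gSq hx).fun_mul (hasDerivAt_gSqLogDeriv hx)).congr_deriv (by ring)
  have hneg : ∀ x ∈ Ioo 0 (π / 2), x * (gSq x * (gSqLogDeriv x ^ 2 + gSqLogDerivDeriv x)) +
      2 * (gSq x * gSqLogDeriv x) < 0 := fun x hx => by
    have := mul_neg_of_pos_of_neg (gSq_pos hx)
      (mul_gSqLogDeriv_sq_add_mul_deriv_add_two_mul_neg hx)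
    linarith
  simpa [div_div_cancel_left' pi_pos.ne'] using
    strictConcaveOn_comp_div pi_pos (half_pos pi_pos) (fun x hx => hasDerivAt_gSq hx) hF' hneg

lemma gfun_eq (n : ℝ) : gfun n = 3 * √n * tan (π / n) ^ ((3 : ℝ) / 2) / gDen (π / n) := by
  rw [gfun, gDen, invGd, show π / n / 2 = π / (2 * n) by ring, tan_eq_sin_div_cos (π / n)]
  ring

lemma gfun_pos {n : ℝ} (hn : 2 < n) : 0 < gfun n := by
  have hx := pi_div_mem_Ioo hn
  have ht := tan_pos_of_pos_of_lt_pi_div_two hx.1 hx.2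
  have hD := gDen_pos hx
  rw [gfun_eq]
  positivity

lemma gfun_sq {n : ℝ} (hn : 2 < n) : gfun n ^ 2 = gSq (π / n) := by
  have hx := pi_div_mem_Ioo hn
  obtain ⟨hsin, hcos⟩ := sin_pos_and_cos_pos hx
  have ht := tan_pos_of_pos_of_lt_pi_div_two hx.1 hx.2
  have hD := gDen_pos hx
  have htan : (tan (π / n) ^ ((3 : ℝ) / 2)) ^ 2 = (sin (π / n) / cos (π / n)) ^ 3 := by
    rw [← rpow_natCast, ← rpow_mul ht.le, tan_eq_sin_div_cos]
    norm_num
  rw [gfun_eq, div_pow, mul_pow, mul_pow, sq_sqrt (by linarith), htan, gSq]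
  field_simp
  norm_num

lemma sqrt_sum_gfun_sq_le {ι : Type*} {t : Finset ι} (ht : t.Nonempty) {n : ι → ℝ}
    (hn : ∀ i ∈ t, 2 < n i) :
    √(∑ i ∈ t, gfun (n i) ^ 2) ≤ √(#t : ℝ) * gfun ((∑ i ∈ t, n i) / #t) := by
  have hmean := lt_sum_div_card ht hn
  rw [← sqrt_sq (gfun_pos hmean).le, ← sqrt_mul (Nat.cast_nonneg _)]
  refine sqrt_le_sqrt ?_
  rw [gfun_sq hmean, sum_congr rfl fun i hi => gfun_sq (hn i hi)]
  exact strictConcaveOn_gSq_pi_div.concaveOn.sum_le_card_mul_map_mean hn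

lemma eq_of_sqrt_card_mul_gfun_le {ι : Type*} {t : Finset ι} (ht : t.Nonempty) {n : ι → ℝ}
    (hn : ∀ i ∈ t, 2 < n i)
    (h : √(#t : ℝ) * gfun ((∑ i ∈ t, n i) / #t) ≤ √(∑ i ∈ t, gfun (n i) ^ 2)) :
    ∀ i ∈ t, ∀ j ∈ t, n i = n j := by
  have hmean := lt_sum_div_card ht hn
  rw [le_sqrt (by positivity [gfun_pos hmean]) (sum_nonneg fun i _ => sq_nonneg _), mul_pow,
    sq_sqrt (Nat.cast_nonneg _), gfun_sq hmean, sum_congr rfl fun i hi => gfun_sq (hn i hi)] at h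
  exact strictConcaveOn_gSq_pi_div.eq_of_card_mul_map_mean_le hn h

theorem stmt_7 (N : ℕ) (hN : 1 ≤ N) (nn : Fin N → ℝ) (hn : ∀ i, 3 ≤ nn i)
    (A_ : Fin N → ℝ) (hA : ∀ i, 0 < A_ i) (A : ℝ) (hsum : ∑ i, A_ i = A) :
    A ^ ((1:ℝ)/2) / (Real.sqrt N * gfun ((∑ i, nn i) / N))
      ≤ (∑ i, A_ i ^ ((3:ℝ)/2) / (A * gfun (nn i))) ∧
    ((∑ i, A_ i ^ ((3:ℝ)/2) / (A * gfun (nn i)))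
        = A ^ ((1:ℝ)/2) / (Real.sqrt N * gfun ((∑ i, nn i) / N)) →
      ∀ i j, nn i = nn j) := by
  subst hsum
  have huniv : (Finset.univ : Finset (Fin N)).Nonempty := univ_nonempty_iff.2 ⟨⟨0, hN⟩⟩
  have hn2 : ∀ i ∈ Finset.univ, 2 < nn i := fun i _ => by linarith [hn i]
  have hjensen := sqrt_sum_gfun_sq_le huniv hn2
  have hjensen_eq := eq_of_sqrt_card_mul_gfun_le huniv hn2
  rw [card_univ, Fintype.card_fin] at hjensen hjensen_eq
  have hholder := rpow_half_div_sqrt_sum_sq_le huniv hA fun i => gfun_pos (hn2 i (mem_univ i))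
  have hAhalf : 0 < (∑ i, A_ i) ^ ((1 : ℝ) / 2) :=
    rpow_pos_of_pos (sum_pos (fun i _ => hA i) huniv) _
  have hT : 0 < √(∑ i, gfun (nn i) ^ 2) :=
    sqrt_pos.2 (sum_pos (fun i hi => pow_pos (gfun_pos (hn2 i hi)) 2) huniv)
  refine ⟨(div_le_div_of_nonneg_left hAhalf.le hT hjensen).trans hholder, fun heq i j => ?_⟩
  rw [heq, div_le_div_iff_of_pos_left hAhalf hT (hT.trans_le hjensen)] at hholder
  exact hjensen_eq hholder i (mem_univ i) j (mem_univ j)
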